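/- Uniqueness for the one-sided Dirichlet problem: let 0 < α < 1, a < b, and φ, ψ Schwartz functions with (D_right)^α φ = (D_right)^α ψ on [a,b) and φ = ψ on [b,∞). Then φ = ψ on [a,∞). -/

import Mathlib

/-!
Maximum principle. The difference `u = φ - ψ` is a Schwartz function vanishing on `[b, ∞)`
with `D^α u = D^α φ - D^α ψ = 0` on `[a, b)`. If `u` were positive somewhere on `[a, ∞)`, it
would attain a positive maximum on `[a, ∞)` at some `x₀ ∈ [a, b)`. There the integrand
`(u t - u x₀) / (t - x₀)^(1+α)` is nonpositive, and negative on `(b, ∞)`, so the integral is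
negative; since `Γ(-α) < 0`, `D^α u (x₀) > 0`, a contradiction. The same applies to `ψ - φ`.
-/

open Real MeasureTheory

/-- The right fractional derivative of order `α`:
`(D_right)^α φ(x) = (1/Γ(-α)) ∫_x^∞ (φ(t) - φ(x))/(t-x)^{1+α} dt`. -/
noncomputable def Dright (α : ℝ) (φ : ℝ → ℝ) (x : ℝ) : ℝ :=
  (1 / Real.Gamma (-α)) * ∫ t in Set.Ioi x, (φ t - φ x) / (t - x) ^ (1 + α)

open Set SchwartzMap

theorem Real.Gamma_neg_of_neg_one_lt_of_neg {s : ℝ} (h1 : -1 < s) (h0 : s < 0) :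
    Gamma s < 0 := by
  have hpos : 0 < Gamma (s + 1) := Gamma_pos_of_pos (by linarith)
  rw [Gamma_add_one h0.ne] at hpos
  exact neg_of_mul_pos_right hpos h0.le

theorem integrableOn_comp_sub_right_iff {g : ℝ → ℝ} (s : Set ℝ) (x : ℝ) :
    IntegrableOn (fun t => g (t - x)) ((· - x) ⁻¹' s) ↔ IntegrableOn g s :=
  (measurePreserving_sub_right volume x).integrableOn_comp_preimage
    (measurableEmbedding_subRight x)

theorem integrableOn_Ioc_sub_rpow {r : ℝ} (hr : -1 < r) (x : ℝ) :
    IntegrableOn (fun t => (t - x) ^ r) (Ioc x (x + 1)) := by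
  have h := (integrableOn_comp_sub_right_iff (Ioc 0 1) x).2
    (intervalIntegral.intervalIntegrable_rpow' hr (a := 0) (b := 1)).1
  simpa [add_comm] using h

theorem integrableOn_Ioi_sub_rpow {r : ℝ} (hr : r < -1) (x : ℝ) :
    IntegrableOn (fun t => (t - x) ^ r) (Ioi (x + 1)) := by
  have h := (integrableOn_comp_sub_right_iff (Ioi 1) x).2 (integrableOn_Ioi_rpow_of_lt hr one_pos)
  simpa [add_comm] using h

theorem LipschitzWith.integrableOn_Dright_integrand {f : ℝ → ℝ} {K : NNReal} {B α : ℝ}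
    (hf : LipschitzWith K f) (hB : ∀ t, |f t| ≤ B) (hα : 0 < α) (hα1 : α < 1) (x : ℝ) :
    IntegrableOn (fun t => (f t - f x) / (t - x) ^ (1 + α)) (Ioi x) := by
  have hmeas : AEStronglyMeasurable (fun t => (f t - f x) / (t - x) ^ (1 + α))
      (volume.restrict (Ioi x)) := by
    refine ContinuousOn.aestronglyMeasurable (fun t ht => ?_) measurableSet_Ioi
    have htx : 0 < t - x := sub_pos.2 ht
    exact ((hf.continuous.sub continuous_const).continuousAt.div
      ((continuous_id.sub continuous_const).continuousAt.rpow_const (Or.inl htx.ne'))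
      (by positivity)).continuousWithinAt
  rw [← Ioc_union_Ioi_eq_Ioi (le_add_of_nonneg_right zero_le_one)]
  refine IntegrableOn.union ?_ ?_
  · refine ((integrableOn_Ioc_sub_rpow (by linarith : -1 < -α) x).const_mul K).mono'
      (hmeas.mono_set Ioc_subset_Ioi_self) ?_
    filter_upwards [ae_restrict_mem measurableSet_Ioc] with t ht
    have htx : 0 < t - x := sub_pos.2 ht.1
    have hlip : |f t - f x| ≤ K * (t - x) := by
      simpa [Real.dist_eq, abs_of_pos htx] using hf.dist_le_mul t x
    calc ‖(f t - f x) / (t - x) ^ (1 + α)‖ = |f t - f x| / (t - x) ^ (1 + α) := by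
          rw [Real.norm_eq_abs, abs_div, abs_of_pos (rpow_pos_of_pos htx _)]
      _ ≤ K * (t - x) / (t - x) ^ (1 + α) := by gcongr
      _ = K * (t - x) ^ (-α) := by
          rw [show -α = 1 - (1 + α) by ring, rpow_sub htx, rpow_one, mul_div_assoc]
  · refine ((integrableOn_Ioi_sub_rpow (by linarith : -(1 + α) < -1) x).const_mul (2 * B)).mono'
      (hmeas.mono_set (Ioi_subset_Ioi (le_add_of_nonneg_right zero_le_one))) ?_
    filter_upwards [ae_restrict_mem measurableSet_Ioi] with t ht
    have htx : 0 < t - x := by linarith [mem_Ioi.1 ht]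
    calc ‖(f t - f x) / (t - x) ^ (1 + α)‖ = |f t - f x| / (t - x) ^ (1 + α) := by
          rw [Real.norm_eq_abs, abs_div, abs_of_pos (rpow_pos_of_pos htx _)]
      _ ≤ (B + B) / (t - x) ^ (1 + α) := by
          gcongr
          exact (abs_sub _ _).trans (add_le_add (hB t) (hB x))
      _ = 2 * B * (t - x) ^ (-(1 + α)) := by rw [rpow_neg htx.le, two_mul, div_eq_mul_inv]

theorem SchwartzMap.lipschitzWith (u : 𝓢(ℝ, ℝ)) : ∃ K, LipschitzWith K u :=
  ⟨‖(derivCLM ℝ ℝ u).toBoundedContinuousFunction‖₊, lipschitzWith_of_nnnorm_deriv_le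
    u.differentiable fun x => by
      simpa using (derivCLM ℝ ℝ u).toBoundedContinuousFunction.nnnorm_coe_le_nnnorm x⟩

theorem SchwartzMap.integrableOn_Dright_integrand {α : ℝ} (hα : 0 < α) (hα1 : α < 1) (u : 𝓢(ℝ, ℝ))
    (x : ℝ) : IntegrableOn (fun t => (u t - u x) / (t - x) ^ (1 + α)) (Ioi x) := by
  obtain ⟨K, hK⟩ := u.lipschitzWith
  exact hK.integrableOn_Dright_integrand
    (fun t => u.toBoundedContinuousFunction.norm_coe_le_norm t) hα hα1 x

theorem Dright_sub {α : ℝ} (hα : 0 < α) (hα1 : α < 1) (φ ψ : 𝓢(ℝ, ℝ)) (x : ℝ) :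
    Dright α ⇑(φ - ψ) x = Dright α φ x - Dright α ψ x := by
  rw [Dright, Dright, Dright, ← mul_sub, ← integral_sub (φ.integrableOn_Dright_integrand hα hα1 x)
    (ψ.integrableOn_Dright_integrand hα hα1 x)]
  congr 1
  refine setIntegral_congr_fun measurableSet_Ioi fun t _ => ?_
  simp only [sub_apply]
  ring

theorem Dright_pos_of_forall_le {α : ℝ} (hα : 0 < α) (hα1 : α < 1) {f : ℝ → ℝ} {x b : ℝ}
    (hint : IntegrableOn (fun t => (f t - f x) / (t - x) ^ (1 + α)) (Ioi x))
    (hle : ∀ t, x < t → f t ≤ f x) (hxb : x ≤ b) (hlt : ∀ t, b < t → f t < f x) :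
    0 < Dright α f x := by
  have hΓ : Gamma (-α) < 0 := Gamma_neg_of_neg_one_lt_of_neg (by linarith) (by linarith)
  have hI : ∫ t in Ioi x, (f t - f x) / (t - x) ^ (1 + α) < 0 := by
    rw [← neg_pos, ← integral_neg, setIntegral_pos_iff_support_of_nonneg_ae
      (f := fun t => -((f t - f x) / (t - x) ^ (1 + α))) ?_ hint.neg]
    · refine lt_of_lt_of_le ?_ (measure_mono (s := Ioi b) fun t ht => ⟨?_, hxb.trans_lt ht⟩)
      · simp
      · have htx : 0 < t - x := by linarith [hxb.trans_lt ht]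
        have hft : f t - f x < 0 := sub_neg.2 (hlt t ht)
        rw [Function.mem_support]
        exact (neg_pos.2 (div_neg_of_neg_of_pos hft (by positivity))).ne'
    · filter_upwards [ae_restrict_mem measurableSet_Ioi] with t ht
      have htx : 0 < t - x := sub_pos.2 ht
      exact neg_nonneg.2 (div_nonpos_of_nonpos_of_nonneg (by linarith [hle t ht]) (by positivity))
  exact mul_pos_of_neg_of_neg (one_div_neg.2 hΓ) hI

theorem SchwartzMap.nonpos_of_Dright_eq_zero {α : ℝ} (hα : 0 < α) (hα1 : α < 1) {a b : ℝ}
    (u : 𝓢(ℝ, ℝ)) (hD : ∀ x ∈ Ico a b, Dright α u x = 0) (hb : ∀ x, b ≤ x → u x = 0) :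
    ∀ x, a ≤ x → u x ≤ 0 := by
  by_contra! ⟨x₁, hax₁, hx₁⟩
  have hx₁b : x₁ ≤ b := le_of_not_ge fun h => by simp [hb x₁ h] at hx₁
  obtain ⟨x₀, ⟨hax₀, hx₀b⟩, hmax⟩ := isCompact_Icc.exists_isMaxOn
    (nonempty_Icc.2 (hax₁.trans hx₁b)) u.continuous.continuousOn
  have hle : ∀ t, a ≤ t → u t ≤ u x₀ := fun t hat => by
    rcases le_or_gt t b with htb | hbt
    · exact hmax ⟨hat, htb⟩
    · rw [hb t hbt.le, ← hb b le_rfl]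
      exact hmax ⟨hax₀.trans hx₀b, le_rfl⟩
  have hpos : 0 < u x₀ := hx₁.trans_le (hle x₁ hax₁)
  have hx₀b' : x₀ < b := hx₀b.lt_of_ne (by rintro rfl; simp [hb _ le_rfl] at hpos)
  refine (Dright_pos_of_forall_le hα hα1 (u.integrableOn_Dright_integrand hα hα1 x₀)
    (fun t ht => hle t (hax₀.trans ht.le)) hx₀b (fun t ht => ?_)).ne' (hD x₀ ⟨hax₀, hx₀b'⟩)
  rwa [hb t ht.le]

theorem dirichlet_uniqueness_general (α : ℝ) (hα : 0 < α) (hα1 : α < 1)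
    (a b : ℝ) (φ ψ : SchwartzMap ℝ ℝ)
    (heq : ∀ x ∈ Set.Ico a b,
      Dright α (fun y => φ y) x = Dright α (fun y => ψ y) x)
    (hb : ∀ x, b ≤ x → φ x = ψ x) :
    ∀ x, a ≤ x → φ x = ψ x := by
  intro x hx
  have hφψ := (φ - ψ).nonpos_of_Dright_eq_zero hα hα1
    (fun y hy => by rw [Dright_sub hα hα1, heq y hy, sub_self])
    (fun y hy => by rw [sub_apply, hb y hy, sub_self]) x hx
  have hψφ := (ψ - φ).nonpos_of_Dright_eq_zero hα hα1
    (fun y hy => by rw [Dright_sub hα hα1, heq y hy, sub_self])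
    (fun y hy => by rw [sub_apply, hb y hy, sub_self]) x hx
  rw [sub_apply, sub_nonpos] at hφψ hψφ
  exact le_antisymm hφψ hψφ

/-- Uniqueness for the one-sided Dirichlet problem. -/
theorem dirichlet_uniqueness (α : ℝ) (hα : 0 < α) (hα1 : α < 1)
    (a b : ℝ) (hab : a < b) (φ ψ : SchwartzMap ℝ ℝ)
    (heq : ∀ x ∈ Set.Ico a b,
      Dright α (fun y => φ y) x = Dright α (fun y => ψ y) x)
    (hb : ∀ x, b ≤ x → φ x = ψ x) :
    ∀ x, a ≤ x → φ x = ψ x :=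
  dirichlet_uniqueness_general α hα hα1 a b φ ψ heq hb
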